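/- Let p ∈ [1,2] and q ∈ [2,∞] with 1/p + 1/q = 1, let f : ℝ^d → ℝ be convex with |f(y) − f(x)| ≤ M‖y − x‖_p for all x, y ∈ ℝ^d, and let γ > 0. Then the randomized smoothing f_γ is continuously differentiable and its gradient is (√d · M/γ)-Lipschitz from the p-norm to the q-norm: ‖∇f_γ(y) − ∇f_γ(x)‖_q ≤ (√d · M/γ)‖y − x‖_p for all x, y ∈ ℝ^d. -/

import Mathlib

open MeasureTheory Metric
open scoped ENNReal

/-- Randomized smoothing: `f_γ(x) = E_u[f(x+u)]` with `u` uniform on the closed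
Euclidean ball of radius `γ` centered at the origin. -/
noncomputable def smooth {d : ℕ} (f : EuclideanSpace ℝ (Fin d) → ℝ) (γ : ℝ)
    (x : EuclideanSpace ℝ (Fin d)) : ℝ :=
  ⨍ u in closedBall (0 : EuclideanSpace ℝ (Fin d)) γ, f (x + u)

/-- The `ℓ_p`-norm (for `p : ℝ≥0∞`) of a vector in `ℝ^d`. -/
noncomputable def lpnorm {d : ℕ} (p : ℝ≥0∞) (x : EuclideanSpace ℝ (Fin d)) : ℝ :=
  ‖(WithLp.equiv p (Fin d → ℝ)).symm (WithLp.equiv 2 (Fin d → ℝ) x)‖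

/-!
The smoothing of a Lipschitz function `f` is differentiable, with `∇f_γ(x) = ⨍_{B(x,γ)} ∇f`
(Rademacher's theorem and differentiation under the integral sign). For a direction `v`, the
function `⟪∇f, v⟫` is bounded by `M‖v‖_p`, so `⟪∇f_γ(y) - ∇f_γ(x), v⟫` is at most `M‖v‖_p` times
the relative volume of the symmetric difference of `B(x,γ)` and `B(y,γ)`. That volume is controlled
by a slab of width `‖y - x‖` orthogonal to `y - x`: a ball minus a translate of itself has no more
volume than such a slab, and the slab has at most `√d ‖y - x‖ / (2γ)` of the volume of the ball,
by the log-convexity of `Γ`. Duality of `ℓ_p` and `ℓ_q` converts the bound in every direction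
into a bound on `‖∇f_γ(y) - ∇f_γ(x)‖_q`, and `‖y - x‖_2 ≤ ‖y - x‖_p` as `p ≤ 2`.
-/

open Real Module
open scoped RealInnerProductSpace NNReal

section Integrals

theorem abs_setIntegral_sub_setIntegral_le {α : Type*} [MeasurableSpace α] {μ : Measure α}
    {s t : Set α} (hs : MeasurableSet s) (ht : MeasurableSet t) (hμs : μ s ≠ ∞) (hμt : μ t ≠ ∞)
    {φ : α → ℝ} (hφ : Measurable φ) {K : ℝ} (hK : ∀ x, |φ x| ≤ K) :
    |∫ x in s, φ x ∂μ - ∫ x in t, φ x ∂μ| ≤ K * (μ.real (s \ t) + μ.real (t \ s)) := by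
  have hint {u : Set α} (hu : μ u ≠ ∞) : IntegrableOn φ u μ :=
    Measure.integrableOn_of_bounded hu hφ.aestronglyMeasurable (ae_of_all _ hK)
  have hbound {u : Set α} (hu : μ u ≠ ∞) (v : Set α) :
      |∫ x in u \ v, φ x ∂μ| ≤ K * μ.real (u \ v) :=
    (Real.norm_eq_abs _).symm.trans_le <| norm_setIntegral_le_of_norm_le_const
      ((measure_mono Set.sdiff_subset).trans_lt hu.lt_top) fun x _ =>
        (Real.norm_eq_abs _).trans_le (hK x)
  rw [← integral_inter_add_sdiff ht (hint hμs), ← integral_inter_add_sdiff hs (hint hμt),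
    Set.inter_comm t s, add_sub_add_left_eq_sub, mul_add]
  exact (abs_sub _ _).trans (add_le_add (hbound hμs t) (hbound hμt s))

variable {E F : Type*} [NormedAddCommGroup E] [MeasurableSpace E] [BorelSpace E]
  [NormedAddCommGroup F] [NormedSpace ℝ F]

theorem setIntegral_closedBall_zero_add (μ : Measure E) [μ.IsAddLeftInvariant] (g : E → F)
    (x : E) (r : ℝ) : ∫ u in closedBall 0 r, g (x + u) ∂μ = ∫ w in closedBall x r, g w ∂μ := by
  have := (measurePreserving_add_left μ x).setIntegral_preimage_emb (measurableEmbedding_addLeft x)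
    g (closedBall x r)
  rwa [preimage_add_closedBall, sub_self] at this

theorem hasFDerivAt_setIntegral_add [NormedSpace ℝ E] [FiniteDimensional ℝ E] (μ : Measure E)
    [μ.IsAddHaarMeasure] {f : E → ℝ} {L : ℝ≥0} (hf : LipschitzWith L f) {s : Set E}
    (hs : IsCompact s) (x : E) :
    Integrable (fun u => fderiv ℝ f (x + u)) (μ.restrict s) ∧
      HasFDerivAt (fun y => ∫ u in s, f (y + u) ∂μ) (∫ u in s, fderiv ℝ f (x + u) ∂μ) x := by
  have : IsFiniteMeasure (μ.restrict s) := isFiniteMeasure_restrict.2 hs.measure_lt_top.ne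
  have hdiff : ∀ᵐ u ∂μ, DifferentiableAt ℝ f (x + u) :=
    (measurePreserving_add_left μ x).quasiMeasurePreserving.ae hf.ae_differentiableAt
  refine hasFDerivAt_integral_of_dominated_loc_of_lip (bound := fun _ => (L : ℝ))
    (ball_mem_nhds x one_pos)
    (Filter.Eventually.of_forall fun y =>
      (hf.continuous.comp (continuous_const_add y)).aestronglyMeasurable)
    ((hf.continuous.comp (continuous_const_add x)).continuousOn.integrableOn_compact hs)
    ((measurable_fderiv ℝ f).comp (measurable_const_add x)).aestronglyMeasurable
    (ae_of_all _ fun u => ?_) (integrable_const _) ?_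
  · rw [Real.nnabs_coe]
    have : LipschitzWith L (fun y => f (y + u)) := by
      simpa [Function.comp_def] using hf.comp (IsometryEquiv.addRight u).isometry.lipschitz
    exact this.lipschitzOnWith
  · filter_upwards [ae_restrict_of_ae hdiff] with u hu
    exact hu.hasFDerivAt.comp x ((hasFDerivAt_id x).add_const u)

end Integrals

theorem two_mul_Gamma_succ_div_two_add_one_le (n : ℕ) :
    2 * Gamma ((n + 1) / 2 + 1) ≤ √(n + 1) * √π * Gamma (n / 2 + 1) := by
  rcases n.eq_zero_or_pos with rfl | hn
  · rw [show ((0 : ℕ) + 1 : ℝ) / 2 + 1 = 1 / 2 + 1 by norm_num, Gamma_add_one (by norm_num),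
      Gamma_one_half_eq]
    norm_num
    linarith
  have hs : (0 : ℝ) < n / 2 + 1 := by positivity
  -- log-convexity at the midpoint of `n / 2 + 1` and `n / 2 + 2`
  have hmid : Gamma ((n + 1) / 2 + 1) ≤ √(n / 2 + 1) * Gamma (n / 2 + 1) := by
    have := Gamma_mul_add_mul_le_rpow_Gamma_mul_rpow_Gamma hs (by linarith : (0:ℝ) < n / 2 + 1 + 1)
      (by norm_num : (0:ℝ) < 1 / 2) (by norm_num : (0:ℝ) < 1 / 2) (by norm_num)
    rw [Gamma_add_one hs.ne', mul_rpow hs.le (Gamma_pos_of_pos hs).le, mul_left_comm,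
      ← rpow_add (Gamma_pos_of_pos hs), ← sqrt_eq_rpow, add_halves, rpow_one] at this
    convert this using 2
    ring_nf
  have hconst : 2 * √(n / 2 + 1) ≤ √(n + 1) * √π := by
    rw [← sqrt_mul (by positivity), show (2 : ℝ) = √4 by norm_num, ← sqrt_mul (by norm_num)]
    apply sqrt_le_sqrt
    have : (1 : ℝ) ≤ n := by exact_mod_cast hn
    nlinarith [pi_gt_three]
  calc 2 * Gamma ((n + 1) / 2 + 1) ≤ 2 * (√(n / 2 + 1) * Gamma (n / 2 + 1)) := by linarith
    _ ≤ √(n + 1) * √π * Gamma (n / 2 + 1) := by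
      rw [← mul_assoc]
      exact mul_le_mul_of_nonneg_right hconst (Gamma_pos_of_pos hs).le

section BallVolume

variable {F G : Type*} [NormedAddCommGroup F] [InnerProductSpace ℝ F] [FiniteDimensional ℝ F]
  [MeasurableSpace F] [BorelSpace F] [NormedAddCommGroup G] [InnerProductSpace ℝ G]
  [FiniteDimensional ℝ G] [MeasurableSpace G] [BorelSpace G]

theorem volume_closedBall_of_nonneg (x : F) {r : ℝ} (hr : 0 ≤ r) :
    volume (closedBall x r) = .ofReal r ^ finrank ℝ F *
      .ofReal (√π ^ finrank ℝ F / Gamma (finrank ℝ F / 2 + 1)) := by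
  rcases subsingleton_or_nontrivial F with hF | hF
  · have hpar := (stdOrthonormalBasis ℝ F).volume_parallelepiped
    rw [Subsingleton.eq_univ_of_nonempty ⟨0, (mem_parallelepiped_iff _ _).2 ⟨0, by simp⟩⟩] at hpar
    simp [Subsingleton.eq_univ_of_nonempty ⟨x, mem_closedBall_self hr⟩, hpar,
      finrank_zero_of_subsingleton]
  · exact InnerProductSpace.volume_closedBall x r

theorem volume_closedBall_le_of_finrank_eq_succ (h : finrank ℝ G = finrank ℝ F + 1) {γ : ℝ}
    (hγ : 0 < γ) :
    volume (closedBall (0 : F) γ) ≤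
      .ofReal (√(finrank ℝ G) / (2 * γ)) * volume (closedBall (0 : G) γ) := by
  rw [volume_closedBall_of_nonneg _ hγ.le, volume_closedBall_of_nonneg _ hγ.le, h]
  set n := finrank ℝ F
  rw [← ENNReal.ofReal_pow hγ.le, ← ENNReal.ofReal_pow hγ.le, ← ENNReal.ofReal_mul (by positivity),
    ← ENNReal.ofReal_mul (by positivity), ← ENNReal.ofReal_mul (by positivity)]
  apply ENNReal.ofReal_le_ofReal
  have hΓ₁ := Gamma_pos_of_pos (by positivity : (0 : ℝ) < n / 2 + 1)
  push_cast
  calc γ ^ n * (√π ^ n / Gamma (n / 2 + 1)) = γ ^ n * √π ^ n * (1 / Gamma (n / 2 + 1)) := by ring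
    _ ≤ γ ^ n * √π ^ n * (√(n + 1) * √π / (2 * Gamma ((n + 1) / 2 + 1))) := by
      refine mul_le_mul_of_nonneg_left ?_ (by positivity)
      rw [div_le_div_iff₀ hΓ₁ (by positivity)]
      linarith [two_mul_Gamma_succ_div_two_add_one_le n]
    _ = √(n + 1) / (2 * γ) * (γ ^ (n + 1) * (√π ^ (n + 1) / Gamma ((n + 1) / 2 + 1))) := by
      field_simp
      ring

variable {E : Type*} [NormedAddCommGroup E] [InnerProductSpace ℝ E] [FiniteDimensional ℝ E]
  [MeasurableSpace E] [BorelSpace E]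

theorem measure_closedBall_sdiff_le_measure_slab (μ : Measure E) [μ.IsAddHaarMeasure]
    (γ : ℝ) (v : E) :
    μ (closedBall 0 γ \ closedBall v γ) ≤
      μ (closedBall 0 γ ∩ {u | |⟪u, v⟫| ≤ ‖v‖ ^ 2 / 2}) := by
  set B : Set E := closedBall 0 γ
  set S := B ∩ {u | |⟪u, v⟫| ≤ ‖v‖ ^ 2 / 2}
  set P := B ∩ {u | ‖v‖ ^ 2 / 2 < ⟪u, v⟫}
  set Q := B ∩ {u | ⟪u, v⟫ < -(‖v‖ ^ 2 / 2)}
  have hQ : MeasurableSet Q :=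
    measurableSet_closedBall.inter
      (measurableSet_lt (continuous_id.inner continuous_const).measurable measurable_const)
  have hcover : B ⊆ P ∪ Q ∪ S := by
    intro u hu
    rcases lt_or_ge (‖v‖ ^ 2 / 2) ⟪u, v⟫ with h₁ | h₁
    · exact Or.inl (Or.inl ⟨hu, h₁⟩)
    rcases lt_or_ge ⟪u, v⟫ (-(‖v‖ ^ 2 / 2)) with h₂ | h₂
    · exact Or.inl (Or.inr ⟨hu, h₂⟩)
    exact Or.inr ⟨hu, abs_le.2 ⟨h₂, h₁⟩⟩
  -- `P` and the translate `Q + v` are disjoint pieces of the lens `B ∩ closedBall v γ`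
  have hlens : P ∪ (· - v) ⁻¹' Q ⊆ B ∩ closedBall v γ := by
    rintro u (⟨hu, huv⟩ | ⟨hu, huv⟩) <;>
      simp only [B, Set.mem_inter_iff, Set.mem_ofPred_eq,
        mem_closedBall_iff_norm, sub_zero, inner_sub_left, real_inner_self_eq_norm_sq] at hu huv ⊢
    · refine ⟨hu, (sq_le_sq₀ (norm_nonneg _) ((norm_nonneg _).trans hu)).1 ?_⟩
      rw [norm_sub_sq_real]
      nlinarith [norm_nonneg u]
    · refine ⟨(sq_le_sq₀ (norm_nonneg _) ((norm_nonneg _).trans hu)).1 ?_, hu⟩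
      have : u = (u - v) + v := by abel
      rw [this, norm_add_sq_real, inner_sub_left, real_inner_self_eq_norm_sq]
      nlinarith [norm_nonneg (u - v)]
  have hdisj : Disjoint P ((· - v) ⁻¹' Q) := by
    refine Set.disjoint_left.2 ?_
    rintro u ⟨-, hP⟩ ⟨-, hQ'⟩
    simp only [Set.mem_ofPred_eq, inner_sub_left, real_inner_self_eq_norm_sq] at hP hQ'
    linarith
  have hB : μ B ≤ μ (B ∩ closedBall v γ) + μ S :=
    calc μ B ≤ μ P + μ Q + μ S :=
          (measure_mono hcover).trans ((measure_union_le _ _).trans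
            (add_le_add_left (measure_union_le _ _) _))
      _ = μ (P ∪ (· - v) ⁻¹' Q) + μ S := by
          rw [measure_union hdisj (hQ.preimage (measurable_sub_const v)),
            (measurePreserving_sub_right μ v).measure_preimage hQ.nullMeasurableSet]
      _ ≤ _ := add_le_add_left (measure_mono hlens) _
  rw [← Set.sdiff_inter_self_eq_sdiff, Set.inter_comm]
  exact (measure_sdiff_le_iff_le_add
    (measurableSet_closedBall.inter measurableSet_closedBall).nullMeasurableSet
    Set.inter_subset_left (measure_closedBall_lt_top.trans_le'
      (measure_mono Set.inter_subset_left)).ne).2 hB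

theorem volume_slab_le {v : E} (hv : v ≠ 0) (γ s : ℝ) :
    volume (closedBall (0 : E) γ ∩ {u | |⟪u, v⟫| ≤ ‖v‖ * s}) ≤
      volume (closedBall (0 : ℝ ∙ v) s) * volume (closedBall (0 : (ℝ ∙ v)ᗮ) γ) := by
  set K := ℝ ∙ v
  -- the decomposition `E ≃ K × Kᗮ` sends the slab into `closedBall 0 s ×ˢ closedBall 0 γ`
  have hψ : MeasurePreserving (fun u => WithLp.ofLp (K.orthogonalDecomposition u)) :=
    (WithLp.volume_preserving_ofLp _ _).comp (LinearIsometryEquiv.measurePreserving _)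
  rw [← Measure.prod_prod, ← Measure.volume_eq_prod, ← hψ.measure_preimage
    (measurableSet_closedBall.prod measurableSet_closedBall).nullMeasurableSet]
  refine measure_mono fun u ⟨hu, huv⟩ => ⟨?_, ?_⟩
  · simp only [Submodule.orthogonalDecomposition_apply, mem_closedBall_zero_iff]
    change ‖K.starProjection u‖ ≤ s
    have hv' : 0 < ‖v‖ := norm_pos_iff.2 hv
    calc ‖K.starProjection u‖ = |⟪u, v⟫| / ‖v‖ := by
          rw [Submodule.starProjection_singleton, norm_smul, real_inner_comm]
          simp only [RCLike.ofReal_real_eq_id, id, norm_div, norm_pow, Real.norm_eq_abs, abs_norm]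
          field_simp
      _ ≤ s := (div_le_iff₀ hv').2 (by rw [mul_comm]; exact huv)
  · simp only [Submodule.orthogonalDecomposition_apply, mem_closedBall_zero_iff]
    exact (Kᗮ.norm_orthogonalProjectionOnto_apply_le u).trans (mem_closedBall_zero_iff.1 hu)

theorem volume_closedBall_sdiff_closedBall_le {γ : ℝ} (hγ : 0 < γ) (v : E) :
    volume (closedBall (0 : E) γ \ closedBall v γ) ≤
      .ofReal (√(finrank ℝ E) * ‖v‖ / (2 * γ)) * volume (closedBall (0 : E) γ) := by
  rcases eq_or_ne v 0 with rfl | hv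
  · simp
  have hK : finrank ℝ (ℝ ∙ v) = 2 * 0 + 1 := finrank_span_singleton hv
  calc volume (closedBall (0 : E) γ \ closedBall v γ)
      ≤ volume (closedBall (0 : E) γ ∩ {u | |⟪u, v⟫| ≤ ‖v‖ * (‖v‖ / 2)}) := by
        rw [← mul_div_assoc, ← sq]
        exact measure_closedBall_sdiff_le_measure_slab volume γ v
    _ ≤ volume (closedBall (0 : ℝ ∙ v) (‖v‖ / 2)) * volume (closedBall (0 : (ℝ ∙ v)ᗮ) γ) :=
        volume_slab_le hv γ _
    _ = .ofReal ‖v‖ * volume (closedBall (0 : (ℝ ∙ v)ᗮ) γ) := by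
        rw [InnerProductSpace.volume_closedBall_of_dim_odd hK, hK,
          ← ENNReal.ofReal_pow (by positivity), ← ENNReal.ofReal_mul (by positivity)]
        norm_num
    _ ≤ .ofReal ‖v‖ * (.ofReal (√(finrank ℝ E) / (2 * γ)) * volume (closedBall (0 : E) γ)) := by
        gcongr
        refine volume_closedBall_le_of_finrank_eq_succ ?_ hγ
        rw [← (ℝ ∙ v).finrank_add_finrank_orthogonal, finrank_span_singleton hv, add_comm]
    _ = .ofReal (√(finrank ℝ E) * ‖v‖ / (2 * γ)) * volume (closedBall (0 : E) γ) := by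
        rw [← mul_assoc, ← ENNReal.ofReal_mul (norm_nonneg _)]
        congr 2
        ring

theorem abs_setIntegral_closedBall_sub_le {γ : ℝ} (hγ : 0 < γ) {φ : E → ℝ} (hφ : Measurable φ)
    {K : ℝ} (hK : ∀ w, |φ w| ≤ K) (x y : E) :
    |(∫ w in closedBall y γ, φ w) - ∫ w in closedBall x γ, φ w| ≤
      K * (√(finrank ℝ E) * ‖y - x‖ / γ) * volume.real (closedBall (0 : E) γ) := by
  have hsdiff (a b : E) : volume.real (closedBall a γ \ closedBall b γ) ≤
      √(finrank ℝ E) * ‖b - a‖ / (2 * γ) * volume.real (closedBall (0 : E) γ) := by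
    have h := volume_closedBall_sdiff_closedBall_le hγ (b - a)
    have hpre : (a + ·) ⁻¹' (closedBall a γ \ closedBall b γ) =
        closedBall 0 γ \ closedBall (b - a) γ := by
      rw [Set.preimage_sdiff, preimage_add_closedBall, preimage_add_closedBall, sub_self]
    rw [← hpre, measure_preimage_add] at h
    have := ENNReal.toReal_mono
      (ENNReal.mul_ne_top ENNReal.ofReal_ne_top measure_closedBall_lt_top.ne) h
    rwa [ENNReal.toReal_mul, ENNReal.toReal_ofReal (by positivity)] at this
  calc |(∫ w in closedBall y γ, φ w) - ∫ w in closedBall x γ, φ w|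
      ≤ K * (volume.real (closedBall y γ \ closedBall x γ) +
          volume.real (closedBall x γ \ closedBall y γ)) :=
        abs_setIntegral_sub_setIntegral_le (μ := volume) measurableSet_closedBall
          measurableSet_closedBall measure_closedBall_lt_top.ne measure_closedBall_lt_top.ne hφ hK
    _ ≤ K * (2 * (√(finrank ℝ E) * ‖y - x‖ / (2 * γ) * volume.real (closedBall (0 : E) γ))) := by
        have hK0 : 0 ≤ K := (abs_nonneg _).trans (hK 0)
        gcongr
        rw [two_mul]
        gcongr
        · rw [norm_sub_rev]; exact hsdiff y x
        · exact hsdiff x y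
    _ = K * (√(finrank ℝ E) * ‖y - x‖ / γ) * volume.real (closedBall (0 : E) γ) := by
        field_simp

end BallVolume

section Smoothing

variable {d : ℕ} {f : EuclideanSpace ℝ (Fin d) → ℝ} {L : ℝ≥0}

theorem hasFDerivAt_smooth (hf : LipschitzWith L f) (γ : ℝ) (x : EuclideanSpace ℝ (Fin d)) :
    HasFDerivAt (smooth f γ) ((volume.real (closedBall (0 : EuclideanSpace ℝ (Fin d)) γ))⁻¹ •
      ∫ u in closedBall 0 γ, fderiv ℝ f (x + u)) x := by
  have hsmooth : smooth f γ = fun y =>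
      (volume.real (closedBall (0 : EuclideanSpace ℝ (Fin d)) γ))⁻¹ •
        ∫ u in closedBall 0 γ, f (y + u) :=
    funext fun y => setAverage_eq _ _ _
  rw [hsmooth]
  exact (hasFDerivAt_setIntegral_add volume hf (isCompact_closedBall 0 γ) x).2.const_smul
    (volume.real (closedBall (0 : EuclideanSpace ℝ (Fin d)) γ))⁻¹

theorem fderiv_smooth_apply (hf : LipschitzWith L f) (γ : ℝ) (x v : EuclideanSpace ℝ (Fin d)) :
    fderiv ℝ (smooth f γ) x v = (volume.real (closedBall (0 : EuclideanSpace ℝ (Fin d)) γ))⁻¹ *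
      ∫ w in closedBall x γ, fderiv ℝ f w v := by
  rw [(hasFDerivAt_smooth hf γ x).fderiv, smul_apply,
    ContinuousLinearMap.integral_apply
      (hasFDerivAt_setIntegral_add volume hf (isCompact_closedBall 0 γ) x).1,
    smul_eq_mul, setIntegral_closedBall_zero_add volume (fun w => fderiv ℝ f w v)]

theorem abs_fderiv_smooth_sub_apply_le (hf : LipschitzWith L f) {γ : ℝ} (hγ : 0 < γ)
    {v : EuclideanSpace ℝ (Fin d)} {K : ℝ} (hK : ∀ w, |fderiv ℝ f w v| ≤ K)
    (x y : EuclideanSpace ℝ (Fin d)) :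
    |(fderiv ℝ (smooth f γ) y - fderiv ℝ (smooth f γ) x) v| ≤ √d * ‖y - x‖ / γ * K := by
  have hV : 0 < volume.real (closedBall (0 : EuclideanSpace ℝ (Fin d)) γ) :=
    ENNReal.toReal_pos (measure_closedBall_pos volume 0 hγ).ne' measure_closedBall_lt_top.ne
  rw [sub_apply, fderiv_smooth_apply hf, fderiv_smooth_apply hf, ← mul_sub, abs_mul,
    abs_of_pos (inv_pos.2 hV), inv_mul_le_iff₀ hV]
  have := abs_setIntegral_closedBall_sub_le hγ (measurable_fderiv_apply_const ℝ f v) hK x y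
  rw [finrank_euclideanSpace_fin] at this
  linarith

theorem contDiff_one_smooth (hf : LipschitzWith L f) {γ : ℝ} (hγ : 0 < γ) :
    ContDiff ℝ 1 (smooth f γ) := by
  have hlip (x y : EuclideanSpace ℝ (Fin d)) :
      ‖fderiv ℝ (smooth f γ) y - fderiv ℝ (smooth f γ) x‖ ≤ √d * L / γ * ‖y - x‖ := by
    refine ContinuousLinearMap.opNorm_le_bound _ (by positivity) fun v => ?_
    have hK (w : EuclideanSpace ℝ (Fin d)) : |fderiv ℝ f w v| ≤ L * ‖v‖ :=
      (Real.norm_eq_abs _).symm.trans_le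
        ((fderiv ℝ f w).le_of_opNorm_le (norm_fderiv_le_of_lipschitz ℝ hf) v)
    rw [Real.norm_eq_abs]
    convert abs_fderiv_smooth_sub_apply_le hf hγ hK x y using 1
    ring
  refine contDiff_one_iff_fderiv.2 ⟨fun x => (hasFDerivAt_smooth hf γ x).differentiableAt, ?_⟩
  refine (LipschitzWith.of_dist_le' (K := √d * L / γ) fun x y => ?_).continuous
  rw [dist_eq_norm, dist_eq_norm]
  exact hlip y x

end Smoothing

section LpNorm

variable {d : ℕ} {p q : ℝ≥0∞}

noncomputable def lpEquiv (p : ℝ≥0∞) (d : ℕ) :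
    EuclideanSpace ℝ (Fin d) ≃L[ℝ] PiLp p (fun _ : Fin d => ℝ) :=
  (PiLp.continuousLinearEquiv 2 ℝ _).trans (PiLp.continuousLinearEquiv p ℝ _).symm

theorem lpnorm_eq_norm_lpEquiv (x : EuclideanSpace ℝ (Fin d)) : lpnorm p x = ‖lpEquiv p d x‖ :=
  rfl

theorem lpEquiv_apply (x : EuclideanSpace ℝ (Fin d)) (i : Fin d) : lpEquiv p d x i = x i := rfl

theorem lpnorm_smul [Fact (1 ≤ p)] (c : ℝ) (x : EuclideanSpace ℝ (Fin d)) :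
    lpnorm p (c • x) = |c| * lpnorm p x := by
  rw [lpnorm_eq_norm_lpEquiv, map_smul, norm_smul, Real.norm_eq_abs, lpnorm_eq_norm_lpEquiv]

theorem lpnorm_single [Fact (1 ≤ p)] (i : Fin d) (a : ℝ) :
    lpnorm p (EuclideanSpace.single i a) = |a| := by
  classical
  have : lpEquiv p d (EuclideanSpace.single i a) = PiLp.single p i a := rfl
  rw [lpnorm_eq_norm_lpEquiv, this, PiLp.norm_single, Real.norm_eq_abs]

theorem norm_le_lpnorm [Fact (1 ≤ p)] (hp : p ≤ 2) (x : EuclideanSpace ℝ (Fin d)) :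
    ‖x‖ ≤ lpnorm p x := by
  have hpt : p ≠ ∞ := ne_top_of_le_ne_top (by simp) hp
  have hp1 : 1 ≤ p.toReal := by simpa using ENNReal.toReal_mono hpt (Fact.out : 1 ≤ p)
  have hp2 : p.toReal ≤ 2 := by simpa using ENNReal.toReal_mono (by simp) hp
  set r := p.toReal
  set A := lpnorm p x with hA_def
  have hA : 0 ≤ A := norm_nonneg _
  have hAr : A ^ r = ∑ i, |x i| ^ r := by
    rw [hA_def, lpnorm_eq_norm_lpEquiv, PiLp.norm_eq_sum (by positivity),
      ← rpow_mul (by positivity), one_div_mul_cancel (by positivity), rpow_one]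
    rfl
  -- split `|x i| ^ 2 = |x i| ^ (2 - r) * |x i| ^ r` and use `|x i| ≤ A` on the first factor
  have hcoord (i : Fin d) : |x i| ^ (2 : ℝ) ≤ A ^ (2 - r) * |x i| ^ r := by
    rw [← sub_add_cancel (2 : ℝ) r, rpow_add' (abs_nonneg _) (by simp), sub_add_cancel]
    gcongr
    exact PiLp.norm_apply_le (lpEquiv p d x) i
  have hsq : ‖x‖ ^ (2 : ℝ) ≤ A ^ (2 : ℝ) :=
    calc ‖x‖ ^ (2 : ℝ) = ∑ i, |x i| ^ (2 : ℝ) := by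
          simp [EuclideanSpace.norm_eq, Real.sq_sqrt (by positivity : 0 ≤ ∑ i, x i ^ 2)]
      _ ≤ ∑ i, A ^ (2 - r) * |x i| ^ r := Finset.sum_le_sum fun i _ => hcoord i
      _ = A ^ (2 : ℝ) := by
          rw [← Finset.mul_sum, ← hAr, ← rpow_add' hA (by simp), sub_add_cancel]
  exact (rpow_le_rpow_iff (norm_nonneg _) hA two_pos).1 hsq

theorem lpnorm_le_of_abs_inner_le [hpq : p.HolderConjugate q] (hp : p ≠ ∞)
    {z : EuclideanSpace ℝ (Fin d)} {K : ℝ} (hK : 0 ≤ K)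
    (h : ∀ v, |⟪z, v⟫| ≤ K * lpnorm p v) : lpnorm q z ≤ K := by
  have : Fact (1 ≤ p) := ⟨hpq.one_le⟩
  have : Fact (1 ≤ q) := ⟨hpq.symm.one_le⟩
  rcases eq_or_ne q ∞ with rfl | hq
  · rw [lpnorm_eq_norm_lpEquiv, ← PiLp.norm_ofLp, pi_norm_le_iff_of_nonneg hK]
    intro i
    classical
    have hi := h (EuclideanSpace.single i 1)
    rw [lpnorm_single, EuclideanSpace.inner_single_right] at hi
    simpa [lpEquiv_apply] using hi
  have hr := ENNReal.HolderConjugate.toReal_of_ne_top hp hq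
  -- `g` attains equality in Hölder's inequality against `|z|`; give it the signs of `z`
  obtain ⟨g, hg, hgz⟩ :=
    (NNReal.isGreatest_Lp Finset.univ (fun i => ‖z i‖₊) hr.symm).1
  set v : EuclideanSpace ℝ (Fin d) := WithLp.toLp 2 fun i => SignType.sign (z i) * g i
  have hzv : ⟪z, v⟫ = lpnorm q z := by
    rw [lpnorm_eq_norm_lpEquiv, PiLp.norm_eq_sum hr.symm.pos, PiLp.inner_apply]
    have := congrArg (fun t : ℝ≥0 => (t : ℝ)) hgz
    push_cast at this
    simp only [lpEquiv_apply, ← this, v, real_inner_eq_re_inner, RCLike.re_to_real]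
    refine Finset.sum_congr rfl fun i _ => ?_
    rw [RCLike.inner_apply, conj_trivial, Real.norm_eq_abs, ← self_mul_sign (z i)]
    ring
  have hv : lpnorm p v ≤ 1 := by
    rw [lpnorm_eq_norm_lpEquiv, PiLp.norm_eq_sum hr.pos]
    refine rpow_le_one (by positivity) ?_ (by simp [hr.pos.le])
    refine (Finset.sum_le_sum fun i _ => ?_).trans (by simpa using NNReal.coe_le_coe.2 hg)
    simp only [lpEquiv_apply, v, Real.norm_eq_abs, abs_mul, NNReal.abs_eq]
    gcongr
    refine mul_le_of_le_one_left (by positivity) ?_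
    rcases lt_trichotomy (z i) 0 with hz | hz | hz <;> simp [hz]
  calc lpnorm q z = ⟪z, v⟫ := hzv.symm
    _ ≤ K * lpnorm p v := (le_abs_self _).trans (h v)
    _ ≤ K := mul_le_of_le_one_right hK hv

end LpNorm

section Lipschitz

variable {d : ℕ} {p : ℝ≥0∞} [Fact (1 ≤ p)] {f : EuclideanSpace ℝ (Fin d) → ℝ} {M : ℝ}

theorem exists_lipschitzWith_of_abs_sub_le_lpnorm
    (hlip : ∀ x y, |f y - f x| ≤ M * lpnorm p (y - x)) : ∃ L, LipschitzWith L f := by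
  set e : EuclideanSpace ℝ (Fin d) →L[ℝ] PiLp p (fun _ : Fin d => ℝ) :=
    (lpEquiv p d).toContinuousLinearMap
  refine ⟨_, LipschitzWith.of_dist_le' (K := max M 0 * ‖e‖) fun x y => ?_⟩
  rw [Real.dist_eq, dist_eq_norm, mul_assoc]
  calc |f x - f y| ≤ M * lpnorm p (x - y) := hlip y x
    _ ≤ max M 0 * (‖e‖ * ‖x - y‖) :=
        mul_le_mul (le_max_left _ _) (e.le_opNorm _) (norm_nonneg _) (le_max_right _ _)

theorem abs_fderiv_apply_le_lpnorm (hlip : ∀ x y, |f y - f x| ≤ M * lpnorm p (y - x))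
    (w v : EuclideanSpace ℝ (Fin d)) : |fderiv ℝ f w v| ≤ M * lpnorm p v := by
  have hK : 0 ≤ M * lpnorm p v := by simpa using (abs_nonneg _).trans (hlip w (w + v))
  by_cases hw : DifferentiableAt ℝ f w
  · have hline : HasDerivAt (fun t : ℝ => w + t • v) v 0 := by
      simpa using ((hasDerivAt_id (0 : ℝ)).smul_const v).const_add w
    have hfw : HasFDerivAt f (fderiv ℝ f w) (w + (0 : ℝ) • v) := by simpa using hw.hasFDerivAt
    refine (hfw.comp_hasDerivAt 0 hline).le_of_lip' hK (Filter.Eventually.of_forall fun t => ?_)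
    simpa [lpnorm_smul, mul_left_comm, mul_comm] using hlip w (w + t • v)
  · simpa [fderiv_zero_of_not_differentiableAt hw] using hK

end Lipschitz

theorem smoothing_gradient_lipschitz_general {d : ℕ} (p q : ℝ≥0∞)
    (hp2 : p ≤ 2) (hpq : 1 / p + 1 / q = 1)
    (f : EuclideanSpace ℝ (Fin d) → ℝ) (M : ℝ)
    (hlip : ∀ x y : EuclideanSpace ℝ (Fin d), |f y - f x| ≤ M * lpnorm p (y - x))
    {γ : ℝ} (hγ : 0 < γ) :
    ContDiff ℝ 1 (smooth f γ) ∧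
      ∀ x y : EuclideanSpace ℝ (Fin d),
        lpnorm q (gradient (smooth f γ) y - gradient (smooth f γ) x)
          ≤ (Real.sqrt d * M / γ) * lpnorm p (y - x) := by
  have : p.HolderConjugate q := ENNReal.holderConjugate_iff.2 (by simpa only [one_div] using hpq)
  have : Fact (1 ≤ p) := ⟨ENNReal.HolderConjugate.one_le p q⟩
  obtain ⟨L, hf⟩ := exists_lipschitzWith_of_abs_sub_le_lpnorm hlip
  refine ⟨contDiff_one_smooth hf hγ, fun x y => ?_⟩
  have hM : 0 ≤ √d * M := by
    rcases Nat.eq_zero_or_pos d with rfl | hd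
    · simp
    · refine mul_nonneg (sqrt_nonneg _) ?_
      simpa [lpnorm_single] using (abs_nonneg _).trans (hlip 0 (EuclideanSpace.single ⟨0, hd⟩ 1))
  calc lpnorm q (gradient (smooth f γ) y - gradient (smooth f γ) x)
      ≤ √d * M / γ * ‖y - x‖ := by
        refine lpnorm_le_of_abs_inner_le (ne_top_of_le_ne_top (by simp) hp2)
          (mul_nonneg (div_nonneg hM hγ.le) (norm_nonneg _)) fun v => ?_
        rw [inner_sub_left, gradient, gradient, InnerProductSpace.toDual_symm_apply,
          InnerProductSpace.toDual_symm_apply, ← sub_apply]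
        convert abs_fderiv_smooth_sub_apply_le hf hγ (abs_fderiv_apply_le_lpnorm hlip · v) x y
          using 1
        ring
    _ ≤ √d * M / γ * lpnorm p (y - x) :=
        mul_le_mul_of_nonneg_left (norm_le_lpnorm hp2 _) (div_nonneg hM hγ.le)

theorem smoothing_gradient_lipschitz {d : ℕ} (p q : ℝ≥0∞)
    (hp1 : 1 ≤ p) (hp2 : p ≤ 2) (hq : 2 ≤ q) (hpq : 1 / p + 1 / q = 1)
    (f : EuclideanSpace ℝ (Fin d) → ℝ) (M : ℝ)
    (hconv : ConvexOn ℝ Set.univ f)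
    (hlip : ∀ x y : EuclideanSpace ℝ (Fin d), |f y - f x| ≤ M * lpnorm p (y - x))
    {γ : ℝ} (hγ : 0 < γ) :
    ContDiff ℝ 1 (smooth f γ) ∧
      ∀ x y : EuclideanSpace ℝ (Fin d),
        lpnorm q (gradient (smooth f γ) y - gradient (smooth f γ) x)
          ≤ (Real.sqrt d * M / γ) * lpnorm p (y - x) :=
  smoothing_gradient_lipschitz_general p q hp2 hpq f M hlip hγ
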